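/- arXiv:2002.09936 — 7 statements merged into one kernel-verified Lean document; each statement's English description precedes it below -/
import Mathlib

section
/- A morphism f = (f_V, {f_{l,v}}) between two moment graphs Γ and Γ' on a lattice Λ, where the partial orders on the vertex sets of Γ and Γ' are the reflexive-transitive closures of their respective edge relations, is an isomorphism of moment graphs if and only if: (ISO1) f_V is bijective, and (ISO2) for each edge v'→w' of Γ' there exists exactly one edge v→w of Γ such that f_V(v) = v' and f_V(w) = w'. -/
noncomputable section

/-- A moment graph on a lattice `Λ`: a poset of vertices (the order given as a
relation with axioms), a set of directed edges `E ⊆ V × V`, and a label function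
assigning to each edge a nonzero element of `Λ`, such that edges respect the
order and are not loops. -/
structure MomentGraph (Λ : Type*) [AddCommGroup Λ] (V : Type*) where
  le : V → V → Prop
  le_refl : ∀ v, le v v
  le_trans : ∀ u v w, le u v → le v w → le u w
  le_antisymm : ∀ v w, le v w → le w v → v = w
  E : V → V → Prop
  label : V → V → Λ
  label_ne_zero : ∀ {v w}, E v w → label v w ≠ 0
  le_of_E : ∀ {v w}, E v w → le v w
  ne_of_E : ∀ {v w}, E v w → v ≠ w

namespace MomentGraph

variable {Λ : Type*} [AddCommGroup Λ] {V V' : Type*}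

/-- Underlying (unoriented) adjacency `v — w`. -/
def Adj (G : MomentGraph Λ V) (v w : V) : Prop := G.E v w ∨ G.E w v

open Classical in
/-- The label of the unoriented edge `v — w` (there are no multiple edges, so this
is well defined on adjacent pairs). -/
def albl (G : MomentGraph Λ V) (v w : V) : Λ := if G.E v w then G.label v w else G.label w v

/-- A morphism of moment graphs on the same lattice `Λ` (Definition 2.3):
a poset morphism on vertices sending edges to edges or collapsing them (MR1),
together with a `ℤ`-linear automorphism of `Λ` for every vertex satisfying
(MR2)(a) and (MR2)(b). -/
structure Hom (G : MomentGraph Λ V) (G' : MomentGraph Λ V') where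
  toFun : V → V'
  mono : ∀ {v w}, G.le v w → G'.le (toFun v) (toFun w)
  adj : ∀ {v w}, G.Adj v w → G'.Adj (toFun v) (toFun w) ∨ toFun v = toFun w
  aut : V → (Λ ≃ₗ[ℤ] Λ)
  label_pm : ∀ {v w}, G.Adj v w → toFun v ≠ toFun w →
      aut v (G.albl v w) = G'.albl (toFun v) (toFun w) ∨
      aut v (G.albl v w) = - G'.albl (toFun v) (toFun w)
  compat : ∀ {v w}, G.Adj v w → toFun v ≠ toFun w → ∀ μ : Λ,
      ∃ n : ℤ, aut v μ - aut w μ = n • G'.albl (toFun v) (toFun w)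

/-- A morphism of moment graphs is an isomorphism if it has a two-sided inverse
morphism, inverting both the vertex map and the label automorphisms. -/
def Hom.IsIso {G : MomentGraph Λ V} {G' : MomentGraph Λ V'} (f : G.Hom G') : Prop :=
  ∃ g : G'.Hom G, (∀ v, g.toFun (f.toFun v) = v) ∧ (∀ v', f.toFun (g.toFun v') = v') ∧
    ∀ v (μ : Λ), g.aut (f.toFun v) (f.aut v μ) = μ

/-- A `Γ`-monodromy: a collection of lattice automorphisms `ξ_v` with
`ξ_v(λ) - ξ_w(λ) ∈ l(v → w)·ℤ` for all edges `v → w`. -/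
def Monodromy (G : MomentGraph Λ V) (ξ : V → (Λ ≃ₗ[ℤ] Λ)) : Prop :=
  ∀ {v w}, G.E v w → ∀ μ : Λ, ∃ n : ℤ, ξ v μ - ξ w μ = n • G.label v w

/-- A `Γ`-compatible equivalence relation (EQV1) and (EQV2). -/
def Compatible (G : MomentGraph Λ V) (s : Setoid V) : Prop :=
  (∀ ⦃v w u⦄, s.r v w → G.le v u → G.le u w → s.r v u) ∧
  (∀ ⦃v₁ w₁⦄, G.E v₁ w₁ → ¬ s.r v₁ w₁ → ∀ v₂, s.r v₂ v₁ →
    (∃! w₂, s.r w₂ w₁ ∧ G.E v₂ w₂) ∧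
    (∀ w₂, s.r w₂ w₁ → G.E v₂ w₂ → G.label v₂ w₂ = G.label v₁ w₁))

/-- Edges of the quotient graph: `[v] → [w]` iff `v ≁ w` and there are
representatives joined by an edge. -/
def QE (G : MomentGraph Λ V) (s : Setoid V) (a b : Quotient s) : Prop :=
  a ≠ b ∧ ∃ v w, Quotient.mk s v = a ∧ Quotient.mk s w = b ∧ G.E v w

open Classical in
/-- The label of a quotient edge, via a choice of representatives. -/
def Qlabel (G : MomentGraph Λ V) (s : Setoid V) (a b : Quotient s) : Λ :=
  if h : ∃ v, ∃ w, Quotient.mk s v = a ∧ Quotient.mk s w = b ∧ G.E v w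
  then G.label h.choose h.choose_spec.choose else 0

/-- The covering relation of the vertex poset. -/
def cov (G : MomentGraph Λ V) (v w : V) : Prop :=
  G.le v w ∧ v ≠ w ∧ ∀ u, G.le v u → G.le u w → u = v ∨ u = w

/-- A special matching of the vertex poset (Definition of Brenti): a bijection `M`
such that `M(v)` covers or is covered by `v`, and if `M(v) ≠ w` and `v ⋖ w`
then `M(v) ≤ M(w)`. -/
def SpecialMatching (G : MomentGraph Λ V) (M : V → V) : Prop :=
  Function.Bijective M ∧ (∀ v, G.cov (M v) v ∨ G.cov v (M v)) ∧
  (∀ v w, M v ≠ w → G.cov v w → G.le (M v) (M w))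

end MomentGraph

noncomputable section Statements
open MomentGraph
variable {Λ : Type*} [AddCommGroup Λ] [Module.Free ℤ Λ] [Module.Finite ℤ Λ]
variable {V V' : Type*}


theorem stmt0 (G : MomentGraph Λ V) (G' : MomentGraph Λ V')
    (hle : ∀ v w, G.le v w ↔ Relation.ReflTransGen G.E v w)
    (hle' : ∀ v' w', G'.le v' w' ↔ Relation.ReflTransGen G'.E v' w')
    (f : G.Hom G') :
    f.IsIso ↔ (Function.Bijective f.toFun ∧
      ∀ v' w', G'.E v' w' →
        ∃! p : V × V, G.E p.1 p.2 ∧ f.toFun p.1 = v' ∧ f.toFun p.2 = w') := by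
  constructor
  · rintro ⟨g, hgf, hfg, hauts⟩
    refine ⟨⟨Function.LeftInverse.injective hgf,
      Function.RightInverse.surjective hfg⟩, ?_⟩
    intro v' w' hE
    have hne : v' ≠ w' := G'.ne_of_E hE
    have hgne : g.toFun v' ≠ g.toFun w' := fun h => hne (by rw [← hfg v', ← hfg w', h])
    have hE1 : G.E (g.toFun v') (g.toFun w') := by
      rcases g.adj (Or.inl hE) with (h | h) | h
      · exact h
      · exfalso
        have h1 : G'.le w' v' := by
          have := f.mono (G.le_of_E h)
          rwa [hfg, hfg] at this
        exact hne (G'.le_antisymm _ _ (G'.le_of_E hE) h1)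
      · exact absurd h hgne
    refine ⟨(g.toFun v', g.toFun w'), ⟨hE1, hfg v', hfg w'⟩, ?_⟩
    rintro ⟨a, b⟩ ⟨hab, ha, hb⟩
    have ha' : a = g.toFun v' := by rw [← ha]; exact (hgf a).symm
    have hb' : b = g.toFun w' := by rw [← hb]; exact (hgf b).symm
    simp [ha', hb']
  · rintro ⟨hbij, huniq⟩
    set e := Equiv.ofBijective f.toFun hbij with he
    have happ : ∀ v, e v = f.toFun v := fun _ => rfl
    have hlift : ∀ {v' w'}, G'.E v' w' → G.E (e.symm v') (e.symm w') := by
      intro v' w' h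
      obtain ⟨p, ⟨hp, h1, h2⟩, -⟩ := huniq v' w' h
      have e1 : e.symm v' = p.1 := by
        apply e.injective; rw [e.apply_symm_apply, happ]; exact h1.symm
      have e2 : e.symm w' = p.2 := by
        apply e.injective; rw [e.apply_symm_apply, happ]; exact h2.symm
      rw [e1, e2]; exact hp
    have hfa : ∀ v', f.toFun (e.symm v') = v' := fun v' => e.apply_symm_apply v'
    -- data for adjacency lifting
    have hAdjlift : ∀ {v' w'}, G'.Adj v' w' → G.Adj (e.symm v') (e.symm w') := by
      intro v' w' h
      rcases h with h | h
      · exact Or.inl (hlift h)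
      · exact Or.inr (hlift h)
    have hne' : ∀ {v' w'}, G'.Adj v' w' → v' ≠ w' := by
      intro v' w' h
      rcases h with h | h
      · exact G'.ne_of_E h
      · exact (G'.ne_of_E h).symm
    have hfne : ∀ {v' w'}, G'.Adj v' w' →
        f.toFun (e.symm v') ≠ f.toFun (e.symm w') := by
      intro v' w' h
      rw [hfa, hfa]; exact hne' h
    have hablrw : ∀ {v' w'}, G'.Adj v' w' →
        G'.albl (f.toFun (e.symm v')) (f.toFun (e.symm w')) = G'.albl v' w' := by
      intro v' w' _; rw [hfa, hfa]
    refine ⟨{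
      toFun := e.symm
      mono := ?_
      adj := fun h => Or.inl (hAdjlift h)
      aut := fun v' => (f.aut (e.symm v')).symm
      label_pm := ?_
      compat := ?_ }, ?_, ?_, ?_⟩
    · intro v' w' h
      rw [hle]
      have h' := (hle' v' w').mp h
      clear h
      induction h' with
      | refl => exact Relation.ReflTransGen.refl
      | tail _ hbc ih => exact ih.tail (hlift hbc)
    · intro v' w' hAdj _
      have hA := hAdjlift hAdj
      rcases f.label_pm hA (hfne hAdj) with h | h
      · rw [hablrw hAdj] at h
        exact Or.inl (((f.aut (e.symm v')).symm_apply_eq).mpr h.symm)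
      · rw [hablrw hAdj] at h
        refine Or.inr ?_
        have := congrArg (f.aut (e.symm v')).symm h
        rw [LinearEquiv.symm_apply_apply, map_neg] at this
        rw [this, neg_neg]
    · intro v' w' hAdj _ μ
      have hA := hAdjlift hAdj
      obtain ⟨n, hn⟩ := f.compat hA (hfne hAdj) ((f.aut (e.symm w')).symm μ)
      rw [LinearEquiv.apply_symm_apply, hablrw hAdj] at hn
      have key : (f.aut (e.symm w')).symm μ - (f.aut (e.symm v')).symm μ
          = n • (f.aut (e.symm v')).symm (G'.albl v' w') := by
        have := congrArg (f.aut (e.symm v')).symm hn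
        rwa [map_sub, LinearEquiv.symm_apply_apply, map_zsmul] at this
      rcases f.label_pm hA (hfne hAdj) with h | h
      · rw [hablrw hAdj] at h
        have hL : (f.aut (e.symm v')).symm (G'.albl v' w')
            = G.albl (e.symm v') (e.symm w') :=
          ((f.aut (e.symm v')).symm_apply_eq).mpr h.symm
        refine ⟨-n, ?_⟩
        rw [← hL, neg_smul, ← key, neg_sub]
      · rw [hablrw hAdj] at h
        have hL : (f.aut (e.symm v')).symm (G'.albl v' w')
            = -(G.albl (e.symm v') (e.symm w')) := by
          have := congrArg (f.aut (e.symm v')).symm h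
          rw [LinearEquiv.symm_apply_apply, map_neg] at this
          rw [this, neg_neg]
        refine ⟨n, ?_⟩
        rw [← neg_sub, key, hL, smul_neg, neg_neg]
    · exact fun v => e.symm_apply_apply v
    · exact fun v' => e.apply_symm_apply v'
    · intro v μ
      have hv : e.symm (f.toFun v) = v := e.symm_apply_apply v
      show (f.aut (e.symm (f.toFun v))).symm (f.aut v μ) = μ
      rw [hv, LinearEquiv.symm_apply_apply]

end Statements
end
end

section
/- Let Γ be a moment graph on a lattice Λ and let ∼ be a Γ-compatible equivalence relation on its vertex set V. Then the quotient Γ_∼ is a moment graph on Λ. In particular: the label l_∼([v]→[w]) := l(v'→w') is independent of the choice of representatives v'∼v, w'∼w with v'→w' ∈ E; the quotient has no directed cycles, so the reflexive-transitive closure ≤_∼ of the relations [v] ≤_∼ [w] for edges [v]→[w] is a partial order on the set of equivalence classes; and every edge [v]→[w] of Γ_∼ satisfies [v] ≤_∼ [w] and [v] ≠ [w]. -/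
noncomputable section

noncomputable section Statements
open MomentGraph
variable {Λ : Type*} [AddCommGroup Λ] [Module.Free ℤ Λ] [Module.Finite ℤ Λ]
variable {V V' : Type*}


theorem stmt1 (G : MomentGraph Λ V) (s : Setoid V) (hcomp : G.Compatible s) :
    (∀ v w v' w', s.r v v' → s.r w w' → ¬ s.r v w → G.E v w → G.E v' w' →
        G.label v w = G.label v' w') ∧
    IsPartialOrder (Quotient s) (Relation.ReflTransGen (G.QE s)) ∧
    (∀ v w, ¬ s.r v w → G.E v w →
        G.Qlabel s (Quotient.mk s v) (Quotient.mk s w) = G.label v w) ∧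
    ∃ Q : MomentGraph Λ (Quotient s),
      Q.le = Relation.ReflTransGen (G.QE s) ∧ Q.E = G.QE s ∧ Q.label = G.Qlabel s := by
  obtain ⟨h1, h2⟩ := hcomp
  have hlbl : ∀ v w v' w', s.r v v' → s.r w w' → ¬ s.r v w → G.E v w → G.E v' w' →
      G.label v w = G.label v' w' := by
    intro v w v' w' hv hw hnr he he'
    exact ((h2 he hnr v' (s.iseqv.symm hv)).2 w' (s.iseqv.symm hw) he').symm
  have reach : ∀ a b, Relation.ReflTransGen (G.QE s) a b →
      ∀ x, Quotient.mk s x = a → ∃ y, Quotient.mk s y = b ∧ G.le x y := by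
    intro a b hab
    induction hab with
    | refl => exact fun x hx => ⟨x, hx, G.le_refl x⟩
    | tail hab hqe ih =>
      intro x hx
      obtain ⟨y, hy, hxy⟩ := ih x hx
      obtain ⟨hne, v, w, hv, hw, he⟩ := hqe
      have hnvw : ¬ s.r v w := fun h => hne (hv ▸ hw ▸ Quotient.sound h)
      have hyv : s.r y v := Quotient.exact (hy.trans hv.symm)
      obtain ⟨⟨w₂, ⟨hw₂, he₂⟩, _⟩, _⟩ := h2 he hnvw y hyv
      exact ⟨w₂, (Quotient.sound hw₂).trans hw,
        G.le_trans _ _ _ hxy (G.le_of_E he₂)⟩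
  have hpo : IsPartialOrder (Quotient s) (Relation.ReflTransGen (G.QE s)) := by
    refine { refl := fun a => Relation.ReflTransGen.refl,
             trans := fun a b c hab hbc => hab.trans hbc,
             antisymm := ?_ }
    intro a b hab hba
    obtain ⟨x, hx⟩ := Quotient.exists_rep a
    obtain ⟨y, hy, hxy⟩ := reach a b hab x hx
    obtain ⟨z, hz, hyz⟩ := reach b a hba y hy
    have hxz : s.r x z := Quotient.exact (hx.trans hz.symm)
    have : s.r x y := h1 hxz hxy hyz
    exact hx ▸ hy ▸ Quotient.sound this
  have hql : ∀ v w, ¬ s.r v w → G.E v w →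
      G.Qlabel s (Quotient.mk s v) (Quotient.mk s w) = G.label v w := by
    intro v w hnr he
    have hex : ∃ v', ∃ w', Quotient.mk s v' = Quotient.mk s v ∧
        Quotient.mk s w' = Quotient.mk s w ∧ G.E v' w' := ⟨v, w, rfl, rfl, he⟩
    rw [Qlabel, dif_pos hex]
    obtain ⟨hv', hw', he'⟩ := hex.choose_spec.choose_spec
    have hnr' : ¬ s.r hex.choose hex.choose_spec.choose := by
      intro h
      exact hnr (s.iseqv.trans (s.iseqv.trans (Quotient.exact hv'.symm)
        (s.iseqv.trans h (Quotient.exact hw'))) (s.iseqv.refl w))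
    exact hlbl _ _ v w (Quotient.exact hv') (Quotient.exact hw') hnr' he' he
  refine ⟨hlbl, hpo, hql, ⟨⟨Relation.ReflTransGen (G.QE s), fun _ => .refl,
      fun _ _ _ h h' => h.trans h', fun _ _ h h' => hpo.antisymm _ _ h h',
      G.QE s, G.Qlabel s, ?_, fun h => .single h, fun h => h.1⟩, rfl, rfl, rfl⟩⟩
  intro a b hqe
  obtain ⟨hne, v, w, hv, hw, he⟩ := hqe
  have hnvw : ¬ s.r v w := fun h => hne (hv ▸ hw ▸ Quotient.sound h)
  rw [← hv, ← hw, hql v w hnvw he]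
  exact G.label_ne_zero he

end Statements
end
end

section
/- Let Γ be a moment graph on Λ and let ξ = {ξ_v}_{v∈V} be a Γ-monodromy. Then the map z ↦ (ξ_v(z))_{v∈V}, where each ξ_v acts on the group ring ℤ[Λ] by e^λ ↦ e^{ξ_v(λ)}, takes values in the multiplicative structure algebra Z_m(Γ) and defines a ring homomorphism c^ξ : ℤ[Λ] → Z_m(Γ) (the ξ-characteristic map). Likewise, the map z ↦ (ξ_v(z))_{v∈V}, where ξ_v acts on the symmetric algebra S*(Λ) by functoriality, takes values in Z_a(Γ) and defines a ring homomorphism c^ξ : S*(Λ) → Z_a(Γ). -/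
noncomputable section

noncomputable section StructureAlgebras

/-- The generic "structure algebra" construction: given an edge relation `E` on `V`
and an `A`-valued function `lab` (the image of the label of each edge in `A`),
this is the subalgebra of `∏_{v ∈ V} A` of tuples `(z_v)` with
`z_v - z_w ∈ lab v w · A` for every edge `v → w`, with coordinate-wise operations
and with `A` acting diagonally. -/
def structAlg {V : Type*} {A : Type*} [CommRing A] (E : V → V → Prop) (lab : V → V → A) :
    Subalgebra A (V → A) where
  carrier := {z | ∀ ⦃v w⦄, E v w → ∃ t, z v - z w = lab v w * t}
  mul_mem' := by
    intro a b ha hb v w h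
    obtain ⟨t, ht⟩ := ha h
    obtain ⟨t', ht'⟩ := hb h
    refine ⟨a v * t' + t * b w, ?_⟩
    simp only [Pi.mul_apply]
    linear_combination a v * ht' + b w * ht
  one_mem' := by intro v w h; exact ⟨0, by simp⟩
  add_mem' := by
    intro a b ha hb v w h
    obtain ⟨t, ht⟩ := ha h
    obtain ⟨t', ht'⟩ := hb h
    refine ⟨t + t', ?_⟩
    simp only [Pi.add_apply]
    linear_combination ht + ht'
  zero_mem' := by intro v w h; exact ⟨0, by simp⟩
  algebraMap_mem' := by
    intro r v w h
    exact ⟨0, by simp⟩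

set_option synthInstance.maxHeartbeats 4000000 in
instance structAlgAddCommGroup {V A : Type*} [CommRing A] (E : V → V → Prop)
    (lab : V → V → A) : AddCommGroup (structAlg E lab) :=
  inferInstance

set_option synthInstance.maxHeartbeats 4000000 in
instance structAlgModule {V A : Type*} [CommRing A] (E : V → V → Prop)
    (lab : V → V → A) : Module A (structAlg E lab) :=
  inferInstance

/-- The group ring `ℤ[Λ]`. -/
abbrev GrpRing (Λ : Type*) [AddCommGroup Λ] := AddMonoidAlgebra ℤ Λ

variable {Λ : Type*} [AddCommGroup Λ]

/-- The basis element `e^μ` of the group ring `ℤ[Λ]`. -/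
def grExp (μ : Λ) : GrpRing Λ := AddMonoidAlgebra.single μ 1

/-- The element `x_μ = 1 - e^{-μ}` of the group ring `ℤ[Λ]`. -/
def grX (μ : Λ) : GrpRing Λ := 1 - grExp (-μ)

/-- The augmentation `ℤ[Λ] → ℤ`, `e^λ ↦ 1`. -/
def grAug (Λ : Type*) [AddCommGroup Λ] : GrpRing Λ →+* ℤ :=
  ((AddMonoidAlgebra.lift ℤ ℤ Λ) 1).toRingHom

/-- The augmentation ideal `I_m ⊂ ℤ[Λ]`. -/
def Im (Λ : Type*) [AddCommGroup Λ] : Ideal (GrpRing Λ) := RingHom.ker (grAug Λ)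

/-- The multiplicative structure algebra of edge data `(E, lab)`:
tuples `(z_v)` of elements of `ℤ[Λ]` with `z_v - z_w ∈ x_{lab v w}·ℤ[Λ]`
for all edges. -/
abbrev ZmOf {V : Type*} (E : V → V → Prop) (lab : V → V → Λ) :
    Subalgebra (GrpRing Λ) (V → GrpRing Λ) :=
  structAlg E fun v w => grX (lab v w)

/-- The multiplicative structure algebra `Z_m(Γ)` of a moment graph. -/
abbrev MomentGraph.Zm {V : Type*} (G : MomentGraph Λ V) :
    Subalgebra (GrpRing Λ) (V → GrpRing Λ) :=
  ZmOf G.E G.label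

/-- Index type of a chosen basis of the lattice `Λ`. -/
abbrev bIdx (Λ : Type*) [AddCommGroup Λ] [Module.Free ℤ Λ] [Module.Finite ℤ Λ] :=
  Module.Free.ChooseBasisIndex ℤ Λ

/-- A model of the symmetric algebra `S^*(Λ)` over `ℤ`: the polynomial ring on a
basis of `Λ`. -/
abbrev SymZ (Λ : Type*) [AddCommGroup Λ] [Module.Free ℤ Λ] [Module.Finite ℤ Λ] :=
  MvPolynomial (bIdx Λ) ℤ

variable [Module.Free ℤ Λ] [Module.Finite ℤ Λ]

/-- The canonical embedding `Λ → S^*(Λ)` (degree-one part). -/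
def iotaZ (Λ : Type*) [AddCommGroup Λ] [Module.Free ℤ Λ] [Module.Finite ℤ Λ] :
    Λ →ₗ[ℤ] SymZ Λ :=
  (Finsupp.linearCombination ℤ fun i => (MvPolynomial.X i : SymZ Λ)).comp
    (Module.Free.chooseBasis ℤ Λ).repr.toLinearMap

/-- The additive structure algebra of edge data `(E, lab)`:
tuples `(z_v)` of elements of `S^*(Λ)` with `z_v - z_w ∈ l(v→w)·S^*(Λ)`
for all edges. -/
abbrev ZaOf {V : Type*} (E : V → V → Prop) (lab : V → V → Λ) :
    Subalgebra (SymZ Λ) (V → SymZ Λ) :=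
  structAlg E fun v w => iotaZ Λ (lab v w)

/-- The additive structure algebra `Z_a(Γ)` of a moment graph. -/
abbrev MomentGraph.Za {V : Type*} (G : MomentGraph Λ V) :
    Subalgebra (SymZ Λ) (V → SymZ Λ) :=
  ZaOf G.E G.label

end StructureAlgebras

noncomputable section Statements
open MomentGraph
variable {Λ : Type*} [AddCommGroup Λ] [Module.Free ℤ Λ] [Module.Finite ℤ Λ]
variable {V V' : Type*}


/-
For an edge `v → w` with label `l`, the ring maps `ξ_v, ξ_w` agree modulo the label
(`x_l` in `ℤ[Λ]`, `l` in `S*(Λ)`) as soon as they do so on generators. On `μ ∈ Λ ⊆ S*(Λ)` this is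
the monodromy condition `ξ_v μ - ξ_w μ ∈ ℤ l`; on `e^μ ∈ ℤ[Λ]` it follows from it because
`e^{-l} ≡ 1 mod x_l`, hence `e^{n l} ≡ 1` for every `n ∈ ℤ`.
-/

lemma RingHom.dvd_sub_of_comp_mk_eq {R A : Type*} [Ring R] [CommRing A] {f g : R →+* A}
    {d : A} (h : (Ideal.Quotient.mk (Ideal.span {d})).comp f =
      (Ideal.Quotient.mk (Ideal.span {d})).comp g) (r : R) : d ∣ f r - g r := by
  rw [← Ideal.mem_span_singleton, ← Ideal.Quotient.eq]
  exact RingHom.congr_fun h r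

namespace structAlg

variable {R A : Type*} [Ring R] [CommRing A] {E : V → V → Prop} {lab : V → V → A}

def lift (φ : V → R →+* A) (h : ∀ ⦃v w⦄, E v w → ∀ r, lab v w ∣ φ v r - φ w r) :
    R →+* structAlg E lab :=
  (RingHom.pi φ).codRestrict (structAlg E lab) fun r _ _ hvw ↦ h hvw r

lemma lift_apply (φ : V → R →+* A) (h : ∀ ⦃v w⦄, E v w → ∀ r, lab v w ∣ φ v r - φ w r)
    (r : R) (v : V) : (lift φ h r : V → A) v = φ v r :=
  rfl

end structAlg

section GroupRing

omit [Module.Free ℤ Λ] [Module.Finite ℤ Λ]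

/-- `μ ↦ e^μ mod d`, which takes values in units since `e^μ e^{-μ} = 1`. -/
def grExpModUnits (d : GrpRing Λ) : Multiplicative Λ →* (GrpRing Λ ⧸ Ideal.span {d})ˣ :=
  ((Ideal.Quotient.mk (Ideal.span {d})).toMonoidHom.comp (AddMonoidAlgebra.of ℤ Λ)).toHomUnits

lemma grExpModUnits_ofAdd (d : GrpRing Λ) (μ : Λ) :
    (grExpModUnits d (Multiplicative.ofAdd μ) : GrpRing Λ ⧸ Ideal.span {d}) =
      Ideal.Quotient.mk _ (grExp μ) :=
  rfl

lemma grX_dvd_grExp_sub_grExp {l a b : Λ} {n : ℤ} (h : a - b = n • l) :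
    grX l ∣ grExp a - grExp b := by
  let χ := grExpModUnits (grX l)
  have hl : χ (Multiplicative.ofAdd (-l)) = 1 :=
    Units.ext (Ideal.Quotient.eq.mpr (Ideal.mem_span_singleton.mpr (by rw [grX]; rfl))).symm
  have hab : a = b + (-n) • (-l) := by rw [neg_smul_neg, ← h, add_sub_cancel]
  have hχ : χ (Multiplicative.ofAdd a) = χ (Multiplicative.ofAdd b) := by
    rw [hab, ofAdd_add, ofAdd_zsmul, map_mul, map_zpow, hl, one_zpow, mul_one]
  rw [← Ideal.mem_span_singleton, ← Ideal.Quotient.eq, ← grExpModUnits_ofAdd,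
    ← grExpModUnits_ofAdd, hχ]

lemma dvd_sub_of_forall_dvd_grExp_sub {A : Type*} [CommRing A] {f g : GrpRing Λ →+* A} {d : A}
    (h : ∀ μ, d ∣ f (grExp μ) - g (grExp μ)) (z : GrpRing Λ) : d ∣ f z - g z := by
  refine RingHom.dvd_sub_of_comp_mk_eq (AddMonoidAlgebra.ringHom_ext' (RingHom.ext_int _ _) ?_) z
  exact MonoidHom.ext fun μ ↦ Ideal.Quotient.eq.mpr <| Ideal.mem_span_singleton.mpr (h μ)

lemma MomentGraph.Monodromy.grX_dvd {G : MomentGraph Λ V} {ξ : V → (Λ ≃ₗ[ℤ] Λ)}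
    (hmon : G.Monodromy ξ) {v w : V} (hvw : G.E v w) (μ : Λ) :
    grX (G.label v w) ∣ grExp (ξ v μ) - grExp (ξ w μ) :=
  (hmon hvw μ).elim fun _ ↦ grX_dvd_grExp_sub_grExp

end GroupRing

lemma iotaZ_dvd_sub {l a b : Λ} {n : ℤ} (h : a - b = n • l) :
    iotaZ Λ l ∣ iotaZ Λ a - iotaZ Λ b := by
  rw [← map_sub, h, map_zsmul, zsmul_eq_mul]
  exact dvd_mul_left _ _

lemma iotaZ_chooseBasis (i : bIdx Λ) :
    iotaZ Λ (Module.Free.chooseBasis ℤ Λ i) = MvPolynomial.X i := by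
  simp [iotaZ]

lemma dvd_sub_of_forall_dvd_iotaZ_sub {A : Type*} [CommRing A] {f g : SymZ Λ →+* A} {d : A}
    (h : ∀ μ, d ∣ f (iotaZ Λ μ) - g (iotaZ Λ μ)) (p : SymZ Λ) : d ∣ f p - g p :=
  RingHom.dvd_sub_of_comp_mk_eq (MvPolynomial.ringHom_ext' (RingHom.ext_int _ _)
    fun i ↦ Ideal.Quotient.eq.mpr <| Ideal.mem_span_singleton.mpr <| by
      simpa only [iotaZ_chooseBasis] using h (Module.Free.chooseBasis ℤ Λ i)) p

lemma MomentGraph.Monodromy.iotaZ_dvd {G : MomentGraph Λ V} {ξ : V → (Λ ≃ₗ[ℤ] Λ)}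
    (hmon : G.Monodromy ξ) {v w : V} (hvw : G.E v w) (μ : Λ) :
    iotaZ Λ (G.label v w) ∣ iotaZ Λ (ξ v μ) - iotaZ Λ (ξ w μ) :=
  (hmon hvw μ).elim fun _ ↦ iotaZ_dvd_sub

theorem stmt4 (G : MomentGraph Λ V) (ξ : V → (Λ ≃ₗ[ℤ] Λ)) (hmon : G.Monodromy ξ)
    (gξ : V → (GrpRing Λ →+* GrpRing Λ))
    (hgξ : ∀ v (μ : Λ), gξ v (grExp μ) = grExp (ξ v μ))
    (sξ : V → (SymZ Λ →+* SymZ Λ))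
    (hsξ : ∀ v (μ : Λ), sξ v (iotaZ Λ μ) = iotaZ Λ (ξ v μ)) :
    (∃ c : GrpRing Λ →+* G.Zm, ∀ (z : GrpRing Λ) (v : V),
        (c z : V → GrpRing Λ) v = gξ v z) ∧
    (∃ c' : SymZ Λ →+* G.Za, ∀ (p : SymZ Λ) (v : V),
        (c' p : V → SymZ Λ) v = sξ v p) := by
  have hm : ∀ ⦃v w⦄, G.E v w → ∀ z, grX (G.label v w) ∣ gξ v z - gξ w z :=
    fun v w hvw ↦ dvd_sub_of_forall_dvd_grExp_sub fun μ ↦ by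
      simpa only [hgξ] using hmon.grX_dvd hvw μ
  have ha : ∀ ⦃v w⦄, G.E v w → ∀ p, iotaZ Λ (G.label v w) ∣ sξ v p - sξ w p :=
    fun v w hvw ↦ dvd_sub_of_forall_dvd_iotaZ_sub fun μ ↦ by
      simpa only [hsξ] using hmon.iotaZ_dvd hvw μ
  exact ⟨⟨structAlg.lift gξ hm, structAlg.lift_apply gξ hm⟩,
    ⟨structAlg.lift sξ ha, structAlg.lift_apply sξ ha⟩⟩

end Statements
end
end

section
/- Projection formula: let π^ξ : Γ → Γ_∼ be a regular ξ-fibration of moment graphs on Λ with finite equivalence classes, with push-forward π^ξ_* : Z_m(Γ) → Z_m(Γ_∼), and let (π^{id})^* : Z_m(Γ_∼) → Z_m(Γ) be the untwisted pull-back (z'_{[u]})_{[u]} ↦ (z'_{[v]})_{v∈V} (each vertex v receives the coordinate of its class [v]). Then for all z' ∈ Z_m(Γ_∼) and z ∈ Z_m(Γ): π^ξ_*((π^{id})^*(z')·z) = z'·π^ξ_*(z). In other words, π^ξ_* is a homomorphism of Z_m(Γ_∼)-modules. -/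
noncomputable section

noncomputable section Fibrations

namespace MomentGraph

variable {Λ : Type*} [AddCommGroup Λ] {V : Type*}

/-- The data of a fibration `π : Γ → Γ_∼` (Definition of fibration): for any two
classes `[v], [w]` an isomorphism of moment graphs between the fibres `Γ_{[v]}`
and `Γ_{[w]}` (full subgraphs on the classes), given by a vertex bijection
`f v w` and a single label automorphism `fl v w` (FB2), compatible with change of
representatives and satisfying the cocycle conditions (FB1). -/
structure Fib (G : MomentGraph Λ V) (s : Setoid V) where
  f : V → V → V → V
  fl : V → V → (Λ ≃ₗ[ℤ] Λ)
  maps_class : ∀ ⦃v w y⦄, s.r y v → s.r (f v w y) w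
  f_congr : ∀ ⦃v v' w w' y⦄, s.r v v' → s.r w w' → s.r y v → f v w y = f v' w' y
  fl_congr : ∀ ⦃v v' w w'⦄, s.r v v' → s.r w w' → fl v w = fl v' w'
  f_id : ∀ ⦃v y⦄, s.r y v → f v v y = y
  f_comp : ∀ ⦃u v w y⦄, s.r y u → f v w (f u v y) = f u w y
  f_mono : ∀ ⦃v w y y'⦄, s.r y v → s.r y' v → G.le y y' → G.le (f v w y) (f v w y')
  f_edge : ∀ ⦃v w y y'⦄, s.r y v → s.r y' v → G.E y y' → G.E (f v w y) (f v w y')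
  f_label : ∀ ⦃v w y y'⦄, s.r y v → s.r y' v → G.E y y' →
    fl v w (G.label y y') = G.label (f v w y) (f v w y') ∨
    fl v w (G.label y y') = - G.label (f v w y) (f v w y')

/-- The set of neighbours of `y` inside its fibre; the multiset `L_{y,∼}` is the
multiset of labels `G.albl y w` for `w` in this set. -/
def fnbr (G : MomentGraph Λ V) (s : Setoid V) (y : V) : Set V :=
  {w | s.r y w ∧ G.Adj y w}

/-- The set of neighbours of `y` inside its fibre indexing the multiset `N_y^ξ`:
those `w` for which `ξ_y(f^{[v],[e]}_l(l(y—w))) ∈ -L_{y,∼}`; the multiset `N_y^ξ`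
is the multiset of `F.fl y e (G.albl y w)` for `w` in this set. -/
def Nset (G : MomentGraph Λ V) (s : Setoid V) (F : G.Fib s) (ξ : V → (Λ ≃ₗ[ℤ] Λ))
    (e : V) (y : V) : Set V :=
  {w ∈ G.fnbr s y | ∃ w' ∈ G.fnbr s y, ξ y (F.fl y e (G.albl y w)) = - G.albl y w'}

variable [Module.Free ℤ Λ] [Module.Finite ℤ Λ]

/-- Compatibility of the collection `ξ = {ξ_y}` with the fibre `Γ_{[e]}`:
conditions (CF1) (product identity in `S^*(Λ)` and stability of `±L_{y,∼}`) and
(CF2) (parity and divisibility along edges inside a fibre). -/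
def FibCompat (G : MomentGraph Λ V) (s : Setoid V) (F : G.Fib s)
    (ξ : V → (Λ ≃ₗ[ℤ] Λ)) (e : V) : Prop :=
  (∀ y : V,
    (∏ᶠ w ∈ G.fnbr s y, iotaZ Λ (ξ y (F.fl y e (G.albl y w)))) =
      (∏ᶠ w ∈ G.fnbr s y, iotaZ Λ (G.albl y w)) ∨
    (∏ᶠ w ∈ G.fnbr s y, iotaZ Λ (ξ y (F.fl y e (G.albl y w)))) =
      - (∏ᶠ w ∈ G.fnbr s y, iotaZ Λ (G.albl y w))) ∧
  (∀ y : V, ∀ w ∈ G.fnbr s y, ∃ w' ∈ G.fnbr s y,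
    ξ y (F.fl y e (G.albl y w)) = G.albl y w' ∨
    ξ y (F.fl y e (G.albl y w)) = - G.albl y w') ∧
  (∀ ⦃y y'⦄, s.r y y' → G.E y y' →
    ((G.Nset s F ξ e y).ncard % 2 ≠ (G.Nset s F ξ e y').ncard % 2) ∧
    ∃ n : ℤ,
      (∑ᶠ w ∈ G.Nset s F ξ e y, ξ y (F.fl y e (G.albl y w))) -
        (∑ᶠ w ∈ G.Nset s F ξ e y', ξ y' (F.fl y' e (G.albl y' w))) = n • G.label y y')

/-- Regularity of a `ξ`-fibration (multiplicative version): the multiset of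
labels `L_{v,∼}` only depends on the class of `v`, each `x_γ` (`γ ∈ L_{[v]}`) is
irreducible in `ℤ[Λ]`, and for distinct `γ, γ' ∈ L_{[v]}`, `x_γ ∣ x_{γ'}·x`
implies `x_γ ∣ x`. -/
def RegularM (G : MomentGraph Λ V) (s : Setoid V) : Prop :=
  (∀ ⦃v w⦄, s.r v w → ∀ μ : Λ,
    {u ∈ G.fnbr s v | G.albl v u = μ}.ncard = {u ∈ G.fnbr s w | G.albl w u = μ}.ncard) ∧
  (∀ v : V, ∀ w ∈ G.fnbr s v, Irreducible (grX (G.albl v w))) ∧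
  (∀ v : V, ∀ w ∈ G.fnbr s v, ∀ w' ∈ G.fnbr s v, G.albl v w ≠ G.albl v w' →
    ∀ t : GrpRing Λ, grX (G.albl v w) ∣ grX (G.albl v w') * t → grX (G.albl v w) ∣ t)

/-- Regularity of a `ξ`-fibration (additive version, in `S^*(Λ)`). -/
def RegularA (G : MomentGraph Λ V) (s : Setoid V) : Prop :=
  (∀ ⦃v w⦄, s.r v w → ∀ μ : Λ,
    {u ∈ G.fnbr s v | G.albl v u = μ}.ncard = {u ∈ G.fnbr s w | G.albl w u = μ}.ncard) ∧
  (∀ v : V, ∀ w ∈ G.fnbr s v, Irreducible (iotaZ Λ (G.albl v w))) ∧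
  (∀ v : V, ∀ w ∈ G.fnbr s v, ∀ w' ∈ G.fnbr s v, G.albl v w ≠ G.albl v w' →
    ∀ t : SymZ Λ, iotaZ Λ (G.albl v w) ∣ iotaZ Λ (G.albl v w') * t → iotaZ Λ (G.albl v w) ∣ t)

end MomentGraph

end Fibrations

/-! The pull-back of `z'` is constant, equal to `z'_{[v]}`, on the fibre `[v]`, so it factors
out of the fibre sum defining the push-forward. The sums live in the fraction field, into which
`ℤ[Λ]` embeds, so equality there is equality in `Z_m(Γ_∼)`. -/

theorem mul_finsum_mem_of_eqOn_const {α R : Type*} [NonUnitalNonAssocSemiring R]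
    [NoZeroDivisors R] {S : Set α} {a f : α → R} {c : R} (ha : ∀ y ∈ S, a y = c) :
    ∑ᶠ y ∈ S, a y * f y = c * ∑ᶠ y ∈ S, f y := by
  rw [mul_finsum_mem]
  exact finsum_mem_congr rfl fun y hy => by rw [ha y hy]

theorem structAlg_ext_of_algebraMap {V A K : Type*} [CommRing A] [CommRing K] [Algebra A K]
    [IsFractionRing A K] {s : Setoid V} {E : Quotient s → Quotient s → Prop}
    {lab : Quotient s → Quotient s → A} {x y : structAlg E lab}
    (h : ∀ v, algebraMap A K ((x : Quotient s → A) (Quotient.mk s v)) =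
      algebraMap A K ((y : Quotient s → A) (Quotient.mk s v))) :
    x = y :=
  Subtype.ext <| funext <| Quotient.ind fun v => IsFractionRing.injective A K (h v)

noncomputable section Statements
open MomentGraph
variable {Λ : Type*} [AddCommGroup Λ] [Module.Free ℤ Λ] [Module.Finite ℤ Λ]
variable {V : Type*}

theorem stmt8_general (G : MomentGraph Λ V) (s : Setoid V) (e : V)
    [IsDomain (GrpRing Λ)]
    (gξ : V → (GrpRing Λ →+* GrpRing Λ))
    (Φ : G.Zm → (ZmOf (G.QE s) (G.Qlabel s)))
    (hΦ : ∀ (z : G.Zm) (v : V),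
      algebraMap (GrpRing Λ) (FractionRing (GrpRing Λ))
          ((Φ z : Quotient s → GrpRing Λ) (Quotient.mk s v)) =
        ∑ᶠ y ∈ {y | s.r v y},
          (algebraMap (GrpRing Λ) (FractionRing (GrpRing Λ)) ((z : V → GrpRing Λ) y)) /
            (algebraMap (GrpRing Λ) (FractionRing (GrpRing Λ))
              (gξ y (∏ᶠ w ∈ G.fnbr s e, grX (G.albl e w))))) :
    ∀ (z' : ZmOf (G.QE s) (G.Qlabel s)) (pz' : G.Zm),
      (∀ y : V, (pz' : V → GrpRing Λ) y = (z' : Quotient s → GrpRing Λ) (Quotient.mk s y)) →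
      ∀ z : G.Zm, Φ (pz' * z) = z' * Φ z := by
  intro z' pz' hpz' z
  refine structAlg_ext_of_algebraMap (K := FractionRing (GrpRing Λ)) fun v => ?_
  have hfibre : ∀ y ∈ {y | s.r v y}, algebraMap _ (FractionRing (GrpRing Λ))
      ((pz' : V → GrpRing Λ) y) = algebraMap _ _ ((z' : Quotient s → GrpRing Λ) ⟦v⟧) :=
    fun y hy => by rw [hpz', Quotient.sound (s.symm hy)]
  simp only [hΦ, Subalgebra.coe_mul, Pi.mul_apply, map_mul, mul_div_assoc]
  exact mul_finsum_mem_of_eqOn_const hfibre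

set_option synthInstance.maxHeartbeats 4000000 in
set_option maxHeartbeats 8000000 in
theorem stmt8 (G : MomentGraph Λ V) (s : Setoid V) (hcomp : G.Compatible s)
    (F : G.Fib s) (ξ : V → (Λ ≃ₗ[ℤ] Λ)) (hmon : G.Monodromy ξ) (e : V)
    (hcf : G.FibCompat s F ξ e) (hreg : G.RegularM s)
    (hfin : ∀ v : V, {w | s.r v w}.Finite)
    [IsDomain (GrpRing Λ)]
    (gξ : V → (GrpRing Λ →+* GrpRing Λ))
    (hgξ : ∀ y (μ : Λ), gξ y (grExp μ) = grExp (ξ y μ))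
    (Φ : G.Zm → (ZmOf (G.QE s) (G.Qlabel s)))
    (hΦ : ∀ (z : G.Zm) (v : V),
      algebraMap (GrpRing Λ) (FractionRing (GrpRing Λ))
          ((Φ z : Quotient s → GrpRing Λ) (Quotient.mk s v)) =
        ∑ᶠ y ∈ {y | s.r v y},
          (algebraMap (GrpRing Λ) (FractionRing (GrpRing Λ)) ((z : V → GrpRing Λ) y)) /
            (algebraMap (GrpRing Λ) (FractionRing (GrpRing Λ))
              (gξ y (∏ᶠ w ∈ G.fnbr s e, grX (G.albl e w))))) :
    ∀ (z' : ZmOf (G.QE s) (G.Qlabel s)) (pz' : G.Zm),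
      (∀ y : V, (pz' : V → GrpRing Λ) y = (z' : Quotient s → GrpRing Λ) (Quotient.mk s y)) →
      ∀ z : G.Zm, Φ (pz' * z) = z' * Φ z :=
  stmt8_general G s e gξ Φ hΦ

end Statements
end
end

section
/- Let Γ be a moment graph on Λ and i ≥ 0. Then the coordinate-wise application of the truncated Chern character ch_i maps the multiplicative structure algebra Z_m(Γ) into the truncated rational additive structure algebra Z_a^{≤i}(Γ)_ℚ, and defines a ring homomorphism (the localized Chern character) cch_i : Z_m(Γ) → Z_a^{≤i}(Γ)_ℚ. -/
noncomputable section

noncomputable section Chern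

variable {Λ : Type*} [AddCommGroup Λ] [Module.Free ℤ Λ] [Module.Finite ℤ Λ]

/-- A model of the rational symmetric algebra `S^*(Λ) ⊗ ℚ`. -/
abbrev SymQ (Λ : Type*) [AddCommGroup Λ] [Module.Free ℤ Λ] [Module.Finite ℤ Λ] :=
  MvPolynomial (bIdx Λ) ℚ

/-- The canonical embedding `Λ → S^*(Λ) ⊗ ℚ`. -/
def iotaQ (Λ : Type*) [AddCommGroup Λ] [Module.Free ℤ Λ] [Module.Finite ℤ Λ] :
    Λ →ₗ[ℤ] SymQ Λ :=
  (Finsupp.linearCombination ℤ fun i => (MvPolynomial.X i : SymQ Λ)).comp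
    (Module.Free.chooseBasis ℤ Λ).repr.toLinearMap

/-- The augmentation ideal `I_a` of the rational symmetric algebra: the kernel of
the ring homomorphism sending every `λ ∈ Λ` to `0`. -/
def IaQ (Λ : Type*) [AddCommGroup Λ] [Module.Free ℤ Λ] [Module.Finite ℤ Λ] :
    Ideal (SymQ Λ) :=
  RingHom.ker (MvPolynomial.constantCoeff : SymQ Λ →+* ℚ)

/-- The truncated rational symmetric algebra `S^{≤ i}_ℚ(Λ) = (S^*(Λ)/I_a^{i+1}) ⊗ ℚ`. -/
abbrev STrunc (Λ : Type*) [AddCommGroup Λ] [Module.Free ℤ Λ] [Module.Finite ℤ Λ] (i : ℕ) :=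
  SymQ Λ ⧸ (IaQ Λ) ^ (i + 1)

/-- The quotient map `S^*_ℚ(Λ) → S^{≤ i}_ℚ(Λ)`. -/
def trMk (Λ : Type*) [AddCommGroup Λ] [Module.Free ℤ Λ] [Module.Finite ℤ Λ] (i : ℕ) :
    SymQ Λ →+* STrunc Λ i :=
  Ideal.Quotient.mk _

/-- The truncated exponential `Σ_{j ≤ i} μ^j/j!` in `S^{≤ i}_ℚ(Λ)`. -/
def texp (Λ : Type*) [AddCommGroup Λ] [Module.Free ℤ Λ] [Module.Finite ℤ Λ]
    (i : ℕ) (μ : Λ) : STrunc Λ i :=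
  ∑ j ∈ Finset.range (i + 1), (j.factorial : ℚ)⁻¹ • (trMk Λ i (iotaQ Λ μ)) ^ j

/-- The truncated rational additive structure algebra of edge data `(E, lab)`. -/
abbrev ZatOf {V : Type*} (i : ℕ) (E : V → V → Prop) (lab : V → V → Λ) :
    Subalgebra (STrunc Λ i) (V → STrunc Λ i) :=
  structAlg E fun v w => trMk Λ i (iotaQ Λ (lab v w))

/-- The truncated rational additive structure algebra `Z_a^{≤ i}(Γ)_ℚ`. -/
abbrev MomentGraph.Zat {V : Type*} (G : MomentGraph Λ V) (i : ℕ) :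
    Subalgebra (STrunc Λ i) (V → STrunc Λ i) :=
  ZatOf i G.E G.label

end Chern

/-! `ch_i` is the `ℤ`-linear extension of `μ ↦ exp(μ)`, where `μ` is nilpotent in
`S^{≤ i}_ℚ(Λ)`, so it is the ring homomorphism `ℤ[Λ] → S^{≤ i}_ℚ(Λ)` induced by a group
homomorphism `Λ → S^{≤ i}_ℚ(Λ)ˣ`. It sends `x_μ = 1 - e^{-μ}` to `1 - exp(-μ)`, a multiple of `μ`,
so applied coordinate-wise it carries the divisibility conditions defining `Z_m(Γ)` to those
defining `Z_a^{≤ i}(Γ)_ℚ`. -/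

theorem IsNilpotent.dvd_exp_sub_one {A : Type*} [Ring A] [Algebra ℚ A] {a : A}
    (ha : IsNilpotent a) : a ∣ IsNilpotent.exp a - 1 := by
  obtain ⟨k, hk⟩ := ha
  rw [IsNilpotent.exp_eq_sum (pow_eq_zero_of_le k.le_succ hk), Finset.sum_range_succ']
  simp only [Nat.factorial_zero, Nat.cast_one, inv_one, pow_zero, one_smul, add_sub_cancel_right]
  refine Finset.dvd_sum fun j _ => ⟨((j + 1).factorial : ℚ)⁻¹ • a ^ j, ?_⟩
  rw [mul_smul_comm, pow_succ']

section StructureAlgebraMap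

variable {V A B : Type*} [CommRing A] [CommRing B] {E : V → V → Prop}
  {la : V → V → A} {lb : V → V → B}

def structAlgMap (f : A →+* B) (hf : ∀ ⦃v w⦄, E v w → lb v w ∣ f (la v w)) :
    structAlg E la →+* structAlg E lb :=
  ((f.compLeft V).comp (structAlg E la).val.toRingHom).codRestrict _ fun z v w hvw => by
    obtain ⟨t, ht⟩ := z.2 hvw
    obtain ⟨s, hs⟩ := hf hvw
    exact ⟨s * f t, by simp [← map_sub, ht, hs, mul_assoc]⟩

theorem structAlgMap_apply (f : A →+* B) (hf : ∀ ⦃v w⦄, E v w → lb v w ∣ f (la v w))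
    (z : structAlg E la) (v : V) : (structAlgMap f hf z : V → B) v = f ((z : V → A) v) :=
  rfl

end StructureAlgebraMap

section ChernCharacter

variable {Λ : Type*} [AddCommGroup Λ] [Module.Free ℤ Λ] [Module.Finite ℤ Λ]

theorem iotaQ_mem_IaQ (μ : Λ) : iotaQ Λ μ ∈ IaQ Λ := by
  simp [IaQ, iotaQ, Finsupp.linearCombination_apply, Finsupp.sum]

theorem trMk_iotaQ_pow_succ (i : ℕ) (μ : Λ) : trMk Λ i (iotaQ Λ μ) ^ (i + 1) = 0 := by
  rw [← map_pow, trMk, Ideal.Quotient.eq_zero_iff_mem]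
  exact Ideal.pow_mem_pow (iotaQ_mem_IaQ μ) _

theorem isNilpotent_trMk_iotaQ (i : ℕ) (μ : Λ) : IsNilpotent (trMk Λ i (iotaQ Λ μ)) :=
  ⟨i + 1, trMk_iotaQ_pow_succ i μ⟩

theorem texp_eq_exp (i : ℕ) (μ : Λ) : texp Λ i μ = IsNilpotent.exp (trMk Λ i (iotaQ Λ μ)) :=
  (IsNilpotent.exp_eq_sum (trMk_iotaQ_pow_succ i μ)).symm

def texpHom (i : ℕ) : Multiplicative Λ →* STrunc Λ i where
  toFun μ := texp Λ i μ.toAdd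
  map_one' := by simp [texp_eq_exp, IsNilpotent.exp_zero]
  map_mul' μ ν := by
    simp only [toAdd_mul, texp_eq_exp, map_add]
    exact IsNilpotent.exp_add_of_commute (Commute.all _ _) (isNilpotent_trMk_iotaQ i _)
      (isNilpotent_trMk_iotaQ i _)

def chern (i : ℕ) : GrpRing Λ →ₐ[ℤ] STrunc Λ i :=
  AddMonoidAlgebra.lift ℤ (STrunc Λ i) Λ (texpHom i)

theorem chern_grExp (i : ℕ) (μ : Λ) : chern i (grExp μ) = texp Λ i μ := by
  simp [chern, grExp, texpHom]

theorem eq_chern_of_grExp (i : ℕ) {ch : GrpRing Λ →ₗ[ℤ] STrunc Λ i}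
    (hch : ∀ μ : Λ, ch (grExp μ) = texp Λ i μ) (a : GrpRing Λ) : ch a = chern i a := by
  have h : ch = (chern i).toLinearMap := AddMonoidAlgebra.lhom_ext' fun μ =>
    LinearMap.ext_ring ((hch μ).trans (chern_grExp i μ).symm)
  exact LinearMap.congr_fun h a

theorem trMk_iotaQ_dvd_chern_grX (i : ℕ) (μ : Λ) : trMk Λ i (iotaQ Λ μ) ∣ chern i (grX μ) := by
  set x := trMk Λ i (iotaQ Λ μ)
  have hx : IsNilpotent x := isNilpotent_trMk_iotaQ i μ
  have h : chern i (grX μ) = IsNilpotent.exp (-x) * (IsNilpotent.exp x - 1) := by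
    rw [mul_sub_one, IsNilpotent.exp_neg_mul_exp_self hx, grX, map_sub, map_one, chern_grExp,
      texp_eq_exp, map_neg, map_neg]
  exact h ▸ dvd_mul_of_dvd_right hx.dvd_exp_sub_one _

end ChernCharacter

noncomputable section Statements
open MomentGraph
variable {Λ : Type*} [AddCommGroup Λ] [Module.Free ℤ Λ] [Module.Finite ℤ Λ]
variable {V V' : Type*}


theorem stmt12 (G : MomentGraph Λ V) (i : ℕ) (ch : GrpRing Λ →ₗ[ℤ] STrunc Λ i)
    (hch : ∀ μ : Λ, ch (grExp μ) = texp Λ i μ) :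
    ∃ Φ : G.Zm →+* G.Zat i, ∀ (z : G.Zm) (v : V),
      (Φ z : V → STrunc Λ i) v = ch ((z : V → GrpRing Λ) v) := by
  exact ⟨structAlgMap (chern i).toRingHom fun v w _ => trMk_iotaQ_dvd_chern_grX i (G.label v w),
    fun z v => (structAlgMap_apply _ _ z v).trans (eq_chern_of_grExp i hch _).symm⟩

end Statements
end
end

section
/- Riemann–Roch for twisted fibrations of moment graphs: let π^ξ : Γ → Γ_∼ be a regular ξ-fibration with distinguished vertex e and finite equivalence classes, and let z = (z_y)_y ∈ Z_m(Γ). Then for every class [v], the following equality holds in the fraction field of the completed rational symmetric algebra Ŝ_ℚ(Λ): Σ_{y∈[v]} ĉh(z_y)·Td_y / ξ_y(∏_{β∈L_{[e]}} β) = ĉh(π^ξ_*(z)_{[v]}), where π^ξ_*(z)_{[v]} = Σ_{y∈[v]} z_y/ξ_y(∏_{β∈L_{[e]}} x_β) ∈ ℤ[Λ] is the multiplicative push-forward, ĉh : ℤ[Λ] → Ŝ_ℚ(Λ) is the completed Chern character e^λ ↦ exp(λ), and Td_y := ∏_{β∈L_{[e]}} ξ_y(β)/(1 − exp(−ξ_y(β)))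 ∈ Ŝ_ℚ(Λ) is the Todd factor at y (each factor μ/(1−exp(−μ)) being a well-defined invertible element of Ŝ_ℚ(Λ)). In other words, the push-forward commutes with the Chern character up to multiplication by the Todd genus of the fibration: π^ξ_*(ĉh(z)·Td^ξ(Γ)) = ĉh(π^ξ_*(z)), where Td^ξ(Γ) = (Td_y)_y and the additive push-forward of a tuple (w_y)_y is ( Σ_{y∈[v]} w_y/ξ_y(∏_{β∈L_{[e]}} β) )_{[v]}. -/
noncomputable section

noncomputable section Completed

/-- A model of the completed rational symmetric algebra
`Ŝ_ℚ(Λ) = ∏_{j ≥ 0} S^j(Λ) ⊗ ℚ`: the formal power series ring on a basis of `Λ`. -/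
abbrev SymHat (Λ : Type*) [AddCommGroup Λ] [Module.Free ℤ Λ] [Module.Finite ℤ Λ] :=
  MvPowerSeries (bIdx Λ) ℚ

variable {Λ : Type*} [AddCommGroup Λ] [Module.Free ℤ Λ] [Module.Finite ℤ Λ]

/-- The exponential `exp(μ) = Σ_{j ≥ 0} μ^j/j! ∈ Ŝ_ℚ(Λ)` of a lattice element
`μ ∈ Λ`: since `μ` is homogeneous of degree one, the degree-`d` coefficient of
`exp μ` is the corresponding coefficient of `μ^{|d|}/|d|!`. -/
def lexp (Λ : Type*) [AddCommGroup Λ] [Module.Free ℤ Λ] [Module.Finite ℤ Λ]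
    (μ : Λ) : SymHat Λ :=
  fun d => (MvPolynomial.coeff d ((iotaQ Λ μ) ^ (d.sum fun _ n => n))) /
    ((d.sum fun _ n => n).factorial : ℚ)

/-- The inclusion `S^*_ℚ(Λ) → Ŝ_ℚ(Λ)`. -/
def symToHat (Λ : Type*) [AddCommGroup Λ] [Module.Free ℤ Λ] [Module.Finite ℤ Λ] :
    SymQ Λ →+* SymHat Λ :=
  (MvPolynomial.coeToMvPowerSeries.ringHom : SymQ Λ →+* SymHat Λ)

end Completed

/-! The Chern character `ĉh` is an injective ring homomorphism, so it extends to the fraction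
fields and carries the defining formula of `π^ξ_*(z)_{[v]}` term by term to `Ŝ_ℚ(Λ)`. There
`ĉh(ξ_y(x_β)) = 1 - exp(-ξ_y(β))`, and the Todd factor is exactly what turns this back into
`ξ_y(β)`: `Td(μ)·(1 - exp(-μ)) = μ`. Since the Todd factors are units, `Td_y` cancels between
numerator and denominator of each summand. -/

theorem IsFractionRing.algebraMap_map_eq_sum_div {A B K L : Type*} [CommRing A] [Field K]
    [Algebra A K] [IsFractionRing A K] [CommRing B] [Field L] [Algebra B L] [IsFractionRing B L]
    {φ : A →+* B} (hφ : Function.Injective φ) {ι : Type*} (t : Finset ι) {p : A} {a d : ι → A}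
    (h : algebraMap A K p = ∑ i ∈ t, algebraMap A K (a i) / algebraMap A K (d i)) :
    algebraMap B L (φ p) = ∑ i ∈ t, algebraMap B L (φ (a i)) / algebraMap B L (φ (d i)) := by
  have hinj : Function.Injective ((algebraMap B L).comp φ) :=
    (IsFractionRing.injective B L).comp hφ
  simpa only [map_sum, map_div₀, IsFractionRing.lift_algebraMap, RingHom.comp_apply] using
    congrArg (IsFractionRing.lift (K := K) hinj) h

theorem MomentGraph.albl_ne_zero {Λ V : Type*} [AddCommGroup Λ] (G : MomentGraph Λ V) {v w : V}
    (h : G.Adj v w) : G.albl v w ≠ 0 := by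
  unfold albl
  split_ifs with hvw
  · exact G.label_ne_zero hvw
  · exact G.label_ne_zero (h.resolve_left hvw)

section Todd

variable {Λ : Type*} [AddCommGroup Λ] [Module.Free ℤ Λ] [Module.Finite ℤ Λ]

theorem map_map_prod_grX (cchat : GrpRing Λ →+* SymHat Λ)
    (hcchat : ∀ μ : Λ, cchat (grExp μ) = lexp Λ μ) {g : GrpRing Λ →+* GrpRing Λ}
    {σ : Λ ≃ₗ[ℤ] Λ} (hg : ∀ μ : Λ, g (grExp μ) = grExp (σ μ)) {ι : Type*} (t : Finset ι)
    (α : ι → Λ) :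
    cchat (g (∏ i ∈ t, grX (α i))) = ∏ i ∈ t, (1 - lexp Λ (-σ (α i))) := by
  simp only [map_prod, grX, map_sub, map_one, hg, hcchat, map_neg]

theorem algebraMap_mul_prod_todd_div [IsDomain (SymHat Λ)] (todd : Λ → SymHat Λ)
    (htodd : ∀ μ : Λ, μ ≠ 0 →
      todd μ * (1 - lexp Λ (-μ)) = symToHat Λ (iotaQ Λ μ) ∧ IsUnit (todd μ))
    {ι : Type*} (t : Finset ι) {μ : ι → Λ} (hμ : ∀ i ∈ t, μ i ≠ 0) (x : SymHat Λ) :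
    algebraMap (SymHat Λ) (FractionRing (SymHat Λ)) (x * ∏ i ∈ t, todd (μ i)) /
        algebraMap (SymHat Λ) (FractionRing (SymHat Λ)) (∏ i ∈ t, symToHat Λ (iotaQ Λ (μ i))) =
      algebraMap (SymHat Λ) (FractionRing (SymHat Λ)) x /
        algebraMap (SymHat Λ) (FractionRing (SymHat Λ)) (∏ i ∈ t, (1 - lexp Λ (-μ i))) := by
  have hsplit : ∏ i ∈ t, symToHat Λ (iotaQ Λ (μ i)) =
      (∏ i ∈ t, todd (μ i)) * ∏ i ∈ t, (1 - lexp Λ (-μ i)) := by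
    rw [← Finset.prod_mul_distrib]
    exact Finset.prod_congr rfl fun i hi => ((htodd _ (hμ i hi)).1).symm
  have htodd_ne : algebraMap (SymHat Λ) (FractionRing (SymHat Λ)) (∏ i ∈ t, todd (μ i)) ≠ 0 :=
    (IsFractionRing.to_map_ne_zero_of_mem_nonZeroDivisors
      (mem_nonZeroDivisors_of_ne_zero (Finset.prod_ne_zero_iff.mpr
        fun i hi => (htodd _ (hμ i hi)).2.ne_zero)))
  rw [hsplit, map_mul, map_mul, mul_comm (algebraMap _ _ (∏ i ∈ t, todd (μ i))),
    mul_div_mul_right _ _ htodd_ne]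

end Todd

noncomputable section Statements
open MomentGraph
variable {Λ : Type*} [AddCommGroup Λ] [Module.Free ℤ Λ] [Module.Finite ℤ Λ]
variable {V : Type*}


theorem stmt16_general (G : MomentGraph Λ V) (s : Setoid V)
    (ξ : V → (Λ ≃ₗ[ℤ] Λ)) (e : V)
    (hfin : ∀ v : V, {w | s.r v w}.Finite)
    [IsDomain (GrpRing Λ)] [IsDomain (SymHat Λ)]
    (gξ : V → (GrpRing Λ →+* GrpRing Λ))
    (hgξ : ∀ y (μ : Λ), gξ y (grExp μ) = grExp (ξ y μ))
    (cchat : GrpRing Λ →+* SymHat Λ)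
    (hcchat : ∀ μ : Λ, cchat (grExp μ) = lexp Λ μ)
    (hinj : Function.Injective cchat)
    (todd : Λ → SymHat Λ)
    (htodd : ∀ μ : Λ, μ ≠ 0 →
      todd μ * (1 - lexp Λ (-μ)) = symToHat Λ (iotaQ Λ μ) ∧ IsUnit (todd μ)) :
    ∀ (z : G.Zm) (v : V) (pfv : GrpRing Λ),
      (algebraMap (GrpRing Λ) (FractionRing (GrpRing Λ)) pfv =
        ∑ᶠ y ∈ {y | s.r v y},
          (algebraMap (GrpRing Λ) (FractionRing (GrpRing Λ)) ((z : V → GrpRing Λ) y)) /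
            (algebraMap (GrpRing Λ) (FractionRing (GrpRing Λ))
              (gξ y (∏ᶠ w ∈ G.fnbr s e, grX (G.albl e w))))) →
      (∑ᶠ y ∈ {y | s.r v y},
        (algebraMap (SymHat Λ) (FractionRing (SymHat Λ))
            (cchat ((z : V → GrpRing Λ) y) * ∏ᶠ w ∈ G.fnbr s e, todd (ξ y (G.albl e w)))) /
          (algebraMap (SymHat Λ) (FractionRing (SymHat Λ))
            (∏ᶠ w ∈ G.fnbr s e, symToHat Λ (iotaQ Λ (ξ y (G.albl e w)))))) =
      algebraMap (SymHat Λ) (FractionRing (SymHat Λ)) (cchat pfv) := by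
  intro z v pfv hpf
  have hfe : (G.fnbr s e).Finite := (hfin e).subset fun _ hw => hw.1
  simp only [finsum_mem_eq_finite_toFinset_sum _ (hfin v),
    finprod_mem_eq_finite_toFinset_prod _ hfe] at hpf ⊢
  rw [IsFractionRing.algebraMap_map_eq_sum_div hinj _ hpf]
  refine Finset.sum_congr rfl fun y _ => ?_
  have hlabel : ∀ w ∈ hfe.toFinset, ξ y (G.albl e w) ≠ 0 := fun w hw =>
    (ξ y).map_ne_zero_iff.mpr (G.albl_ne_zero (hfe.mem_toFinset.mp hw).2)
  rw [algebraMap_mul_prod_todd_div todd htodd _ hlabel,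
    map_map_prod_grX cchat hcchat (hgξ y)]

set_option synthInstance.maxHeartbeats 4000000 in
set_option maxHeartbeats 8000000 in
theorem stmt16 (G : MomentGraph Λ V) (s : Setoid V) (hcomp : G.Compatible s)
    (F : G.Fib s) (ξ : V → (Λ ≃ₗ[ℤ] Λ)) (hmon : G.Monodromy ξ) (e : V)
    (hcf : G.FibCompat s F ξ e) (hreg : G.RegularM s)
    (hfin : ∀ v : V, {w | s.r v w}.Finite)
    [IsDomain (GrpRing Λ)] [IsDomain (SymHat Λ)]
    (gξ : V → (GrpRing Λ →+* GrpRing Λ))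
    (hgξ : ∀ y (μ : Λ), gξ y (grExp μ) = grExp (ξ y μ))
    (cchat : GrpRing Λ →+* SymHat Λ)
    (hcchat : ∀ μ : Λ, cchat (grExp μ) = lexp Λ μ)
    (hinj : Function.Injective cchat)
    (todd : Λ → SymHat Λ)
    (htodd : ∀ μ : Λ, μ ≠ 0 →
      todd μ * (1 - lexp Λ (-μ)) = symToHat Λ (iotaQ Λ μ) ∧ IsUnit (todd μ)) :
    ∀ (z : G.Zm) (v : V) (pfv : GrpRing Λ),
      (algebraMap (GrpRing Λ) (FractionRing (GrpRing Λ)) pfv =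
        ∑ᶠ y ∈ {y | s.r v y},
          (algebraMap (GrpRing Λ) (FractionRing (GrpRing Λ)) ((z : V → GrpRing Λ) y)) /
            (algebraMap (GrpRing Λ) (FractionRing (GrpRing Λ))
              (gξ y (∏ᶠ w ∈ G.fnbr s e, grX (G.albl e w))))) →
      (∑ᶠ y ∈ {y | s.r v y},
        (algebraMap (SymHat Λ) (FractionRing (SymHat Λ))
            (cchat ((z : V → GrpRing Λ) y) * ∏ᶠ w ∈ G.fnbr s e, todd (ξ y (G.albl e w)))) /
          (algebraMap (SymHat Λ) (FractionRing (SymHat Λ))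
            (∏ᶠ w ∈ G.fnbr s e, symToHat Λ (iotaQ Λ (ξ y (G.albl e w)))))) =
      algebraMap (SymHat Λ) (FractionRing (SymHat Λ)) (cchat pfv) :=
  stmt16_general G s ξ e hfin gξ hgξ cchat hcchat hinj todd htodd

end Statements
end
end

section
/- Let π^ξ : Γ → Γ_∼ be a regular ξ-fibration with distinguished vertex e, let [v] be a class and y ∈ [v], and assume that ξ_y ∘ f^{[v],[e]}_l maps the multiset L_{[v]} bijectively onto the multiset obtained from L_{[v]} by replacing γ by −γ exactly for the elements whose image under f^{[v],[e]}_l lies in N_y^ξ. Then the following identities hold: ξ_y(∏_{β∈f^{[v],[e]}_l(L_{[v]})} x_β) = (∏_{γ∈L_{[v]}} x_γ) · ∏_{β∈N_y^ξ} (−e^{−ξ_y(β)}) in ℤ[Λ], and ξ_y(∏_{β∈f^{[v],[e]}_l(L_{[v]})} β) = (−1)^{#N_y^ξ} · ∏_{γ∈L_{[v]}} γ in S*(Λ). -/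
/-!
Each `γ ∈ L_{[v]}` is sent by `ξ_y ∘ f^{[v],[e]}_l` to `±σ(γ)` for a permutation `σ` of
`L_{[v]}`, with the minus sign exactly on `N_y^ξ`. In `S^*(Λ)` each sign contributes `-1`.
In `ℤ[Λ]` it contributes the unit `-e^{-ξ_y(β)}`, because `x_{-γ} = x_γ · (-e^γ)`.
Reindexing the products along `σ` gives both identities.
-/

noncomputable section

section GroupRing

variable {Λ Λ' : Type*} [AddCommGroup Λ] [AddCommGroup Λ']

theorem grExp_zero : grExp (0 : Λ) = 1 := rfl

theorem grExp_add (a b : Λ) : grExp (a + b) = grExp a * grExp b := by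
  simp [grExp, AddMonoidAlgebra.single_mul_single]

theorem grX_neg (γ : Λ) : grX (-γ) = grX γ * -grExp γ := by
  have hunit : grExp γ * grExp (-γ) = 1 := by rw [← grExp_add, add_neg_cancel, grExp_zero]
  simp only [grX, neg_neg]
  linear_combination -hunit

theorem map_grX {F : Type*} [FunLike F Λ Λ'] [AddMonoidHomClass F Λ Λ'] {φ : F}
    {g : GrpRing Λ →+* GrpRing Λ'} (hg : ∀ μ, g (grExp μ) = grExp (φ μ)) (μ : Λ) :
    g (grX μ) = grX (φ μ) := by
  simp only [grX, map_sub, map_one, hg, map_neg]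

end GroupRing

section SignedReindexing

variable {α β M : Type*} [CommMonoid M]

theorem finprod_mem_const_eq_pow_ncard {t : Set α} (ht : t.Finite) (c : M) :
    ∏ᶠ _ ∈ t, c = c ^ t.ncard := by
  rw [finprod_mem_eq_finite_toFinset_prod _ ht, Finset.prod_const, Set.ncard_eq_toFinset_card _ ht]

theorem finprod_mem_eq_of_bijOn_mul {s t : Set α} {s' : Set β} (hs : s.Finite) (hts : t ⊆ s)
    {σ : α → β} (hσ : Set.BijOn σ s s') {f : α → M} {g : β → M} {h : α → M}
    (hin : ∀ w ∈ t, f w = g (σ w) * h w) (hout : ∀ w ∈ s \ t, f w = g (σ w)) :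
    ∏ᶠ w ∈ s, f w = (∏ᶠ w ∈ s', g w) * ∏ᶠ w ∈ t, h w := by
  have ht : t.Finite := hs.subset hts
  calc ∏ᶠ w ∈ s, f w = (∏ᶠ w ∈ t, f w) * ∏ᶠ w ∈ s \ t, f w :=
        (finprod_mem_mul_sdiff hts hs).symm
    _ = (∏ᶠ w ∈ t, g (σ w)) * (∏ᶠ w ∈ t, h w) * ∏ᶠ w ∈ s \ t, g (σ w) := by
        rw [finprod_mem_congr rfl hin, finprod_mem_congr rfl hout, finprod_mem_mul_distrib ht]
    _ = (∏ᶠ w ∈ s, g (σ w)) * ∏ᶠ w ∈ t, h w := by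
        rw [← finprod_mem_mul_sdiff hts hs]; ac_rfl
    _ = (∏ᶠ w ∈ s', g w) * ∏ᶠ w ∈ t, h w := by
        rw [finprod_mem_eq_of_bijOn σ hσ fun _ _ => rfl]

end SignedReindexing

noncomputable section Statements
open MomentGraph
variable {Λ : Type*} [AddCommGroup Λ] [Module.Free ℤ Λ] [Module.Finite ℤ Λ]
variable {V : Type*}


theorem stmt17_general (G : MomentGraph Λ V) (s : Setoid V)
    (F : G.Fib s) (ξ : V → (Λ ≃ₗ[ℤ] Λ)) (e : V)
    (hfin : ∀ v : V, {w | s.r v w}.Finite)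
    (gξ : V → (GrpRing Λ →+* GrpRing Λ))
    (hgξ : ∀ y (μ : Λ), gξ y (grExp μ) = grExp (ξ y μ))
    (v y : V)
    (σb : V → V) (hσ : Set.BijOn σb (G.fnbr s y) (G.fnbr s y))
    (hsgn : ∀ w ∈ G.fnbr s y,
      (w ∈ G.Nset s F ξ e y → ξ y (F.fl y e (G.albl y w)) = - G.albl y (σb w)) ∧
      (w ∉ G.Nset s F ξ e y → ξ y (F.fl y e (G.albl y w)) = G.albl y (σb w))) :
    gξ y (∏ᶠ w ∈ G.fnbr s y, grX (F.fl y e (G.albl y w))) =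
      (∏ᶠ w ∈ G.fnbr s y, grX (G.albl y w)) *
        (∏ᶠ w ∈ G.Nset s F ξ e y, (- grExp (- (ξ y (F.fl y e (G.albl y w)))))) ∧
    (∏ᶠ w ∈ G.fnbr s y, iotaZ Λ (ξ y (F.fl y e (G.albl y w)))) =
      ((-1 : ℤ) ^ (G.Nset s F ξ e y).ncard) •
        (∏ᶠ w ∈ G.fnbr s y, iotaZ Λ (G.albl y w)) := by
  have hL : (G.fnbr s y).Finite := (hfin y).subset fun _ hw => hw.1
  have hNL : G.Nset s F ξ e y ⊆ G.fnbr s y := fun _ hw => hw.1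
  have hin w (hw : w ∈ G.Nset s F ξ e y) := (hsgn w (hNL hw)).1 hw
  have hout w (hw : w ∈ G.fnbr s y \ G.Nset s F ξ e y) := (hsgn w hw.1).2 hw.2
  constructor
  · rw [← MonoidHom.coe_coe (gξ y), MonoidHom.map_finprod_mem _ _ hL, MonoidHom.coe_coe]
    refine finprod_mem_eq_of_bijOn_mul hL hNL hσ (fun w hw => ?_) (fun w hw => ?_)
    · rw [map_grX (hgξ y), hin w hw, grX_neg, neg_neg]
    · rw [map_grX (hgξ y), hout w hw]
  · rw [finprod_mem_eq_of_bijOn_mul (g := fun w => iotaZ Λ (G.albl y w)) (h := fun _ => -1)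
        hL hNL hσ (fun w hw => by rw [hin w hw, map_neg, mul_neg_one])
        (fun w hw => by rw [hout w hw]),
      finprod_mem_const_eq_pow_ncard (hL.subset hNL), zsmul_eq_mul, Int.cast_pow, Int.cast_neg,
      Int.cast_one, mul_comm]

set_option synthInstance.maxHeartbeats 4000000 in
set_option maxHeartbeats 8000000 in
theorem stmt17 (G : MomentGraph Λ V) (s : Setoid V) (hcomp : G.Compatible s)
    (F : G.Fib s) (ξ : V → (Λ ≃ₗ[ℤ] Λ)) (hmon : G.Monodromy ξ) (e : V)
    (hcf : G.FibCompat s F ξ e) (hreg : G.RegularM s)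
    (hfin : ∀ v : V, {w | s.r v w}.Finite)
    (gξ : V → (GrpRing Λ →+* GrpRing Λ))
    (hgξ : ∀ y (μ : Λ), gξ y (grExp μ) = grExp (ξ y μ))
    (v y : V) (hy : s.r y v)
    (σb : V → V) (hσ : Set.BijOn σb (G.fnbr s y) (G.fnbr s y))
    (hsgn : ∀ w ∈ G.fnbr s y,
      (w ∈ G.Nset s F ξ e y → ξ y (F.fl y e (G.albl y w)) = - G.albl y (σb w)) ∧
      (w ∉ G.Nset s F ξ e y → ξ y (F.fl y e (G.albl y w)) = G.albl y (σb w))) :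
    gξ y (∏ᶠ w ∈ G.fnbr s y, grX (F.fl y e (G.albl y w))) =
      (∏ᶠ w ∈ G.fnbr s y, grX (G.albl y w)) *
        (∏ᶠ w ∈ G.Nset s F ξ e y, (- grExp (- (ξ y (F.fl y e (G.albl y w)))))) ∧
    (∏ᶠ w ∈ G.fnbr s y, iotaZ Λ (ξ y (F.fl y e (G.albl y w)))) =
      ((-1 : ℤ) ^ (G.Nset s F ξ e y).ncard) •
        (∏ᶠ w ∈ G.fnbr s y, iotaZ Λ (G.albl y w)) :=
  stmt17_general G s F ξ e hfin gξ hgξ v y σb hσ hsgn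

end Statements
end
end
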